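/- Let X be a finite simplicial complex and G_{1,X} the looped 1-skeleton of bd(X). For a vertex x of X, let G^x be the subgraph of G_{1,X} induced by the vertices at distance at most 1 from x (i.e., x and the barycenters of faces containing x). Then G^x is dismantlable. -/

import Mathlib

structure SymGraph (V : Type) where
  Adj : V → V → Prop
  symm : ∀ v w, Adj v w → Adj w v

def IsHom {V W : Type} (G : SymGraph V) (H : SymGraph W) (f : V → W) : Prop :=
  ∀ a b, G.Adj a b → H.Adj (f a) (f b)

def ExpAdj {VT VG : Type} (T : SymGraph VT) (G : SymGraph VG) (f g : VT → VG) : Prop :=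
  ∀ t t', T.Adj t t' → G.Adj (f t) (g t')

def expGraph {VT VG : Type} (T : SymGraph VT) (G : SymGraph VG) : SymGraph (VT → VG) :=
  ⟨fun f g => ExpAdj T G f g, fun _ _ h t t' htt => G.symm _ _ (h t' t (T.symm _ _ htt))⟩

def prodG {VA VB : Type} (A : SymGraph VA) (B : SymGraph VB) : SymGraph (VA × VB) :=
  ⟨fun p q => A.Adj p.1 q.1 ∧ B.Adj p.2 q.2,
   fun _ _ h => ⟨A.symm _ _ h.1, B.symm _ _ h.2⟩⟩

inductive Dismantles {V : Type} [DecidableEq V] (G : SymGraph V) : Finset V → Prop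
  | single (v : V) (hv : G.Adj v v) : Dismantles G {v}
  | fold (s : Finset V) (v w : V) (hv : v ∈ s) (hw : w ∈ s) (hvw : v ≠ w)
      (hN : ∀ u ∈ s, G.Adj v u → G.Adj w u)
      (hrest : Dismantles G (s.erase v)) : Dismantles G s

def Dismantlable {V : Type} [DecidableEq V] (G : SymGraph V) : Prop :=
  ∃ s : Finset V, (∀ v, v ∈ s) ∧ Dismantles G s

inductive WalkLen {V : Type} (A : V → V → Prop) : ℕ → V → V → Prop
  | zero (v : V) : WalkLen A 0 v v
  | succ {n : ℕ} {u v w : V} (h : A u v) (hw : WalkLen A n v w) : WalkLen A (n+1) u w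

structure SC (V : Type) where
  faces : Set (Finset V)
  singleton_mem : ∀ x : V, {x} ∈ faces
  down_closed : ∀ s ∈ faces, ∀ t, t ⊆ s → t.Nonempty → t ∈ faces

def ballGraph {V : Type} (X : SC V) (x : V) :
    SymGraph {σ : {σ : Finset V // σ ∈ X.faces} // x ∈ σ.1 ∨ σ.1 ⊆ {x}} :=
  ⟨fun σ τ => σ.1.1 ⊆ τ.1.1 ∨ τ.1.1 ⊆ σ.1.1, fun _ _ h => h.symm⟩

lemma dismantles_of_dominating {V : Type} [DecidableEq V] (G : SymGraph V) (w : V)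
    (hw : G.Adj w w) (hdom : ∀ v, G.Adj w v) :
    ∀ s : Finset V, w ∈ s → Dismantles G s := by
  intro s
  induction s using Finset.strongInduction with
  | _ s ih =>
    intro hws
    by_cases hsingle : s = {w}
    · subst hsingle; exact Dismantles.single w hw
    · obtain ⟨v, hv, hvw⟩ : ∃ v ∈ s, v ≠ w := by
        by_contra h
        push_neg at h
        exact hsingle (Finset.eq_singleton_iff_unique_mem.mpr ⟨hws, h⟩)
      exact Dismantles.fold s v w hv hws hvw (fun u _ _ => hdom u)
        (ih _ (Finset.erase_ssubset hv) (Finset.mem_erase.mpr ⟨(Ne.symm hvw), hws⟩))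

theorem stmt19 {V : Type} [Fintype V] [DecidableEq V] (X : SC V) (x : V) :
    Dismantlable (ballGraph X x) := by
  classical
  haveI : Fintype {σ : {σ : Finset V // σ ∈ X.faces} // x ∈ σ.1 ∨ σ.1 ⊆ {x}} :=
    Fintype.ofFinite _
  set w : {σ : {σ : Finset V // σ ∈ X.faces} // x ∈ σ.1 ∨ σ.1 ⊆ {x}} :=
    ⟨⟨{x}, X.singleton_mem x⟩, Or.inl (Finset.mem_singleton_self x)⟩ with hwdef
  have hdom : ∀ v, (ballGraph X x).Adj w v := by
    intro v
    rcases v.2 with h | h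
    · exact Or.inl (Finset.singleton_subset_iff.mpr h)
    · exact Or.inr h
  exact ⟨Finset.univ, fun v => Finset.mem_univ v,
    dismantles_of_dominating _ w (hdom w) hdom Finset.univ (Finset.mem_univ w)⟩
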